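/- Fix a constant 0<α<1/100. There exists a constant C depending only on α such that for all T≥2 and all real t with T^{1−α/4}<|t|<2T−T^{1−α/4}, one has |W(t) − 1| ≤ C·T^{−100}. -/
import Mathlib


/-- The smooth cutoff W(t) = W_α(t). -/
noncomputable def Wwt (α T t : ℝ) : ℝ :=
  (1 - Real.exp (-(t / (2 * T) ^ (1 - α / 2)) ^ (2 * ⌈(1000 : ℝ) / α⌉₊))) *
    (1 - Real.exp (-((4 * T ^ 2 - t ^ 2) / (4 * T ^ (2 - α / 2))) ^ (2 * ⌈(1000 : ℝ) / α⌉₊)))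

set_option maxHeartbeats 1000000 in
/-- W(t) = 1 + O(T^{-100}) for T^{1-α/4} < |t| < 2T - T^{1-α/4}. -/
theorem stmt_5 (α : ℝ) (hα0 : 0 < α) (hα1 : α < 1 / 100) :
    ∃ C : ℝ, ∀ T : ℝ, 2 ≤ T → ∀ t : ℝ,
      T ^ (1 - α / 4) < |t| → |t| < 2 * T - T ^ (1 - α / 4) →
      |Wwt α T t - 1| ≤ C * T ^ (-100 : ℝ) := by
  have hαne : α ≠ 0 := ne_of_gt hα0
  refine ⟨3 * 101 ^ 101 + ((2:ℝ) ^ ((8:ℝ)/α)) ^ (100:ℝ), ?_⟩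
  intro T hT t ht1 ht2
  have hT0 : (0:ℝ) < T := by linarith
  have hT1 : (1:ℝ) ≤ T := by linarith
  unfold Wwt
  set n : ℕ := 2 * ⌈(1000:ℝ)/α⌉₊ with hn
  have hNceil : (1000:ℝ)/α ≤ (⌈(1000:ℝ)/α⌉₊ : ℝ) := Nat.le_ceil _
  have hnα : (1:ℝ) ≤ (n:ℝ) * (α/8) := by
    have h1000 : (1000:ℝ) ≤ (⌈(1000:ℝ)/α⌉₊ : ℝ) * α := by
      rw [div_le_iff₀ hα0] at hNceil; linarith
    have hcast : (n:ℝ) = 2 * (⌈(1000:ℝ)/α⌉₊ : ℝ) := by rw [hn]; push_cast; ring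
    nlinarith
  have hne : Even n := even_two_mul _
  have hTpos : ∀ r : ℝ, 0 < T ^ r := fun r => Real.rpow_pos_of_pos hT0 r
  have e1 : T ^ (α/4) * T ^ (1 - α/2) = T ^ (1 - α/4) := by
    rw [← Real.rpow_add hT0]; ring_nf
  have e3 : T ^ (α/4) * T ^ (2 - α/2) = T ^ (2 - α/4) := by
    rw [← Real.rpow_add hT0]; ring_nf
  have e2 : T ^ (1 - α/4) * T = T ^ (2 - α/4) := by
    nth_rewrite 2 [← Real.rpow_one T]
    rw [← Real.rpow_add hT0]; ring_nf
  have e4 : (2*T) ^ (1 - α/2) = 2 ^ (1 - α/2) * T ^ (1 - α/2) :=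
    Real.mul_rpow (by norm_num) hT0.le
  have e5 : (2:ℝ) ^ (1 - α/2) ≤ 2 := by
    calc (2:ℝ) ^ (1 - α/2) ≤ (2:ℝ) ^ (1:ℝ) :=
          Real.rpow_le_rpow_of_exponent_le (by norm_num) (by linarith)
      _ = 2 := Real.rpow_one 2
  have e4pos : (0:ℝ) < (2*T) ^ (1 - α/2) := Real.rpow_pos_of_pos (by linarith) _
  set s : ℝ := T ^ (α/4) / 2 with hs
  have hspos : 0 < s := by positivity
  set x : ℝ := t / (2*T) ^ (1 - α/2) with hx
  have hxabs : s ≤ |x| := by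
    rw [hx, abs_div, abs_of_pos e4pos, le_div_iff₀ e4pos, hs]
    calc T ^ (α/4) / 2 * (2*T)^(1-α/2) = (2^(1-α/2)/2) * (T^(α/4) * T^(1-α/2)) := by
          rw [e4]; ring
      _ ≤ 1 * T^(1-α/4) := by
          rw [e1]
          apply mul_le_mul_of_nonneg_right _ (hTpos _).le
          linarith
      _ ≤ |t| := by rw [one_mul]; exact ht1.le
  set y : ℝ := (4*T^2 - t^2) / (4 * T^(2 - α/2)) with hy
  have hyge : s ≤ y := by
    rw [hy, le_div_iff₀ (by positivity), hs]
    have h1 : T^(1-α/4) ≤ 2*T - |t| := by linarith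
    have key : T^(1-α/4) * (2*T) ≤ (2*T - |t|) * (2*T + |t|) := by
      apply mul_le_mul h1 (by nlinarith [abs_nonneg t]) (by linarith) (by nlinarith [abs_nonneg t, hTpos (1-α/4)])
    have habs2 : |t|^2 = t^2 := sq_abs t
    nlinarith [key, e2, e3, hTpos (2-α/4)]
  have hxpow : s ^ n ≤ x ^ n := by
    calc s ^ n ≤ |x| ^ n := pow_le_pow_left₀ hspos.le hxabs n
      _ = x ^ n := hne.pow_abs x
  have hypow : s ^ n ≤ y ^ n := pow_le_pow_left₀ hspos.le hyge n
  set a : ℝ := Real.exp (-x ^ n) with ha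
  set b : ℝ := Real.exp (-y ^ n) with hb
  have hsn0 : 0 ≤ s ^ n := by positivity
  have ha0 : 0 < a := Real.exp_pos _
  have hb0 : 0 < b := Real.exp_pos _
  have ha1 : a ≤ 1 := Real.exp_le_one_iff.mpr (by linarith)
  have hb1 : b ≤ 1 := Real.exp_le_one_iff.mpr (by linarith)
  have haE : a ≤ Real.exp (-s ^ n) := Real.exp_le_exp.mpr (by linarith)
  have hbE : b ≤ Real.exp (-s ^ n) := Real.exp_le_exp.mpr (by linarith)
  have hTm100 : 0 < T ^ (-100:ℝ) := hTpos _
  by_cases hc : (2:ℝ) ^ ((8:ℝ)/α) ≤ T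
  · -- large T
    have habsW : |(1-a)*(1-b) - 1| ≤ a + b := by
      rw [abs_le]; constructor <;> nlinarith
    have hs2 : (2:ℝ) ≤ T ^ (α/8) := by
      have h8 : ((2:ℝ) ^ ((8:ℝ)/α)) ^ (α/8) = 2 := by
        rw [← Real.rpow_mul (by norm_num : (0:ℝ) ≤ 2)]
        rw [show (8:ℝ)/α * (α/8) = 1 by field_simp]
        exact Real.rpow_one 2
      calc (2:ℝ) = ((2:ℝ) ^ ((8:ℝ)/α)) ^ (α/8) := h8.symm
        _ ≤ T ^ (α/8) := Real.rpow_le_rpow (by positivity) hc (by positivity)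
    have hs3 : T ^ (α/8) ≤ s := by
      have heq : T ^ (α/8) * T ^ (α/8) = T ^ (α/4) := by
        rw [← Real.rpow_add hT0]; ring_nf
      rw [hs]
      nlinarith [hTpos (α/8)]
    have hsn : T ≤ s ^ n := by
      have h1 : T ≤ T ^ ((α/8) * (n:ℝ)) := by
        nth_rewrite 1 [← Real.rpow_one T]
        exact Real.rpow_le_rpow_of_exponent_le hT1 (by linarith [hnα])
      have h2 : T ^ ((α/8) * (n:ℝ)) = (T ^ (α/8)) ^ n := by
        rw [Real.rpow_mul hT0.le, Real.rpow_natCast]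
      calc T ≤ (T ^ (α/8)) ^ n := by rw [← h2]; exact h1
        _ ≤ s ^ n := pow_le_pow_left₀ (hTpos _).le hs3 n
    have hET : Real.exp (-T) ≤ 101 ^ 101 * T ^ (-100:ℝ) := by
      have h1 : (T/101)^(101:ℕ) ≤ Real.exp T := by
        calc (T/101)^(101:ℕ) ≤ (Real.exp (T/101))^(101:ℕ) :=
              pow_le_pow_left₀ (by positivity) (by linarith [Real.add_one_le_exp (T/101)]) 101
          _ = Real.exp T := by rw [← Real.exp_nat_mul]; congr 1; push_cast; ring
      have h2 : Real.exp (-T) ≤ 101^101 / T^(101:ℕ) := by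
        rw [Real.exp_neg]
        rw [div_eq_mul_inv]
        have hTp : (0:ℝ) < (T/101)^(101:ℕ) := by positivity
        have h3 : (Real.exp T)⁻¹ ≤ ((T/101)^(101:ℕ))⁻¹ := by
          apply inv_anti₀ hTp h1
        calc (Real.exp T)⁻¹ ≤ ((T/101)^(101:ℕ))⁻¹ := h3
          _ = 101^101 * (T^(101:ℕ))⁻¹ := by
              rw [div_pow]; rw [inv_div]; ring
      have h4 : T ^ (-100:ℝ) = (T^(100:ℕ))⁻¹ := by
        rw [← Real.rpow_natCast T 100, ← Real.rpow_neg hT0.le]; norm_num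
      have h5 : (T^(101:ℕ))⁻¹ ≤ (T^(100:ℕ))⁻¹ := by
        apply inv_anti₀ (by positivity)
        exact pow_le_pow_right₀ hT1 (by norm_num)
      rw [h4]
      calc Real.exp (-T) ≤ 101^101 / T^(101:ℕ) := h2
        _ = 101^101 * (T^(101:ℕ))⁻¹ := by ring
        _ ≤ 101^101 * (T^(100:ℕ))⁻¹ := by
            apply mul_le_mul_of_nonneg_left h5 (by positivity)
    have hexp : Real.exp (-s ^ n) ≤ Real.exp (-T) := Real.exp_le_exp.mpr (by linarith)
    have hrpow_nonneg : (0:ℝ) ≤ ((2:ℝ) ^ ((8:ℝ)/α)) ^ (100:ℝ) := by positivity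
    calc |(1-a)*(1-b) - 1| ≤ a + b := habsW
      _ ≤ 2 * Real.exp (-T) := by linarith
      _ ≤ 2 * (101^101 * T ^ (-100:ℝ)) := by linarith [hET]
      _ ≤ (3 * 101 ^ 101 + ((2:ℝ) ^ ((8:ℝ)/α)) ^ (100:ℝ)) * T ^ (-100:ℝ) := by
          have hK : (0:ℝ) ≤ (101:ℝ)^101 := by positivity
          have hfin : (0:ℝ) ≤ ((101:ℝ)^101 + ((2:ℝ) ^ ((8:ℝ)/α)) ^ (100:ℝ)) * T ^ (-100:ℝ) := by
            apply mul_nonneg (by linarith) hTm100.le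
          nlinarith [hfin]
  · -- small T
    push_neg at hc
    have habsW : |(1-a)*(1-b) - 1| ≤ 1 := by
      rw [abs_le]; constructor <;> nlinarith
    have h100 : T ^ ((100:ℝ)) ≤ ((2:ℝ) ^ ((8:ℝ)/α)) ^ (100:ℝ) :=
      Real.rpow_le_rpow hT0.le hc.le (by norm_num)
    have hone : (1:ℝ) = T ^ ((100:ℝ)) * T ^ ((-100:ℝ)) := by
      rw [← Real.rpow_add hT0]; norm_num
    calc |(1-a)*(1-b) - 1| ≤ 1 := habsW
      _ = T ^ ((100:ℝ)) * T ^ ((-100:ℝ)) := hone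
      _ ≤ ((2:ℝ) ^ ((8:ℝ)/α)) ^ (100:ℝ) * T ^ (-100:ℝ) :=
          mul_le_mul_of_nonneg_right h100 hTm100.le
      _ ≤ (3 * 101 ^ 101 + ((2:ℝ) ^ ((8:ℝ)/α)) ^ (100:ℝ)) * T ^ (-100:ℝ) := by
          apply mul_le_mul_of_nonneg_right _ hTm100.le
          have hK : (0:ℝ) ≤ 3 * 101 ^ 101 := by positivity
          linarith
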